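/- Let (V,g) be an n-dimensional real inner product space, S a symmetric bilinear form on V, a ∈ V a vector with dual covector α = g(a,·), and set H = S − α⊗α + (1/2)|a|²·g (the algebraic form of the conformal Hessian term). Then the full contraction of the exterior square of H satisfies c²(H²) = 4·σ₂(S) + ((n−1)(n−4)/2)·|a|⁴ + 2(n−3)·(cS)·|a|² + 4·S(a,a). -/

import Mathlib

/-!
Double forms on an `n`-dimensional real inner product space `(V, g)`, represented
by their components with respect to a (fixed) orthonormal basis: a `(p,q)`-double
form is determined by its values on pairs of increasingly ordered tuples of
distinct basis vectors, i.e. by a function `Finset (Fin n) → Finset (Fin n) → ℝ`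
(supported on pairs of sets of cardinalities `p` and `q`).
-/

open Finset

noncomputable section

abbrev DF (n : ℕ) := Finset (Fin n) → Finset (Fin n) → ℝ

namespace DF

variable {n : ℕ}

/-- The sign of the shuffle placing the increasing enumeration of `A` before that of
`B` and reordering increasingly. -/
def shuffleSign (A B : Finset (Fin n)) : ℝ :=
  (-1 : ℝ) ^ ∑ a ∈ A, (B.filter fun b => b < a).card

/-- The exterior product of double forms (Kulkarni–Nomizu type product), in components. -/
def mul (ω θ : DF n) : DF n := fun S T =>
  ∑ A ∈ S.powerset, ∑ C ∈ T.powerset,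
    shuffleSign A (S \ A) * shuffleSign C (T \ C) * ω A C * θ (S \ A) (T \ C)

/-- The `(0,0)`-double form `1`. -/
def one (n : ℕ) : DF n := fun S T => if S = ∅ ∧ T = ∅ then 1 else 0

/-- Powers `ω^k` of a double form with respect to the exterior product. -/
def pow (ω : DF n) : ℕ → DF n
  | 0 => one n
  | k + 1 => mul (pow ω k) ω

/-- The contraction `c ω`, obtained by summing, over an orthonormal basis, the
insertion of the basis vector as first argument in both slots. -/
def contr (ω : DF n) : DF n := fun S T =>
  ∑ i : Fin n,
    if i ∈ S ∨ i ∈ T then 0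
    else shuffleSign {i} S * shuffleSign {i} T * ω (insert i S) (insert i T)

/-- The iterated contraction `c^r`. -/
def contrN (r : ℕ) (ω : DF n) : DF n := contr^[r] ω

/-- The metric `g` as a `(1,1)`-double form (components in an orthonormal basis). -/
def gm (n : ℕ) : DF n := fun S T => if S = T ∧ S.card = 1 then 1 else 0

/-- The inner product of double forms induced by `g`. -/
def dinner (ω θ : DF n) : ℝ :=
  ∑ S : Finset (Fin n), ∑ T : Finset (Fin n), ω S T * θ S T

/-- The scalar given by a `(0,0)`-double form. -/
def toScalar (ω : DF n) : ℝ := ω ∅ ∅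

open scoped Classical in
/-- `σ_k` of a `(1,1)`-double form: the `k`-th elementary symmetric function of the
eigenvalues of the corresponding self-adjoint endomorphism (whose matrix in the
orthonormal basis is the matrix of components). -/
def sigma (k : ℕ) (ω : DF n) : ℝ :=
  if h : (Matrix.of fun i j => ω {i} {j} : Matrix (Fin n) (Fin n) ℝ).IsHermitian then
    ∑ s ∈ Finset.powersetCard k (Finset.univ : Finset (Fin n)), ∏ i ∈ s, h.eigenvalues i
  else 0

/-- `ω` is a `(p,p)`-double form: its components are supported in bidegree `(p,p)`. -/
def IsDeg (p : ℕ) (ω : DF n) : Prop := ∀ S T, ω S T ≠ 0 → S.card = p ∧ T.card = p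

/-- Symmetry of a double form: `ω(a;b) = ω(b;a)`. -/
def IsSymm (ω : DF n) : Prop := ∀ S T, ω S T = ω T S

/-- The first Bianchi identity for a `(p,p)`-double form (in components): the complete
antisymmetrization over the first `p+1` vector arguments vanishes. -/
def FirstBianchi (p : ℕ) (ω : DF n) : Prop :=
  ∀ U T : Finset (Fin n), U.card = p + 1 → T.card = p - 1 →
    ∑ i ∈ U,
      (if i ∈ T then 0
       else shuffleSign {i} (U.erase i) * shuffleSign {i} T * ω (U.erase i) (insert i T)) = 0

end DF

section Geometry

variable {n : ℕ} {V : Type*} [NormedAddCommGroup V] [InnerProductSpace ℝ V]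

/-- The components, in the orthonormal basis `e`, of a `(p,p)`-double form given as a
function of `p + p` vector arguments. -/
def ofForm (e : OrthonormalBasis (Fin n) ℝ V) (p : ℕ)
    (ω : (Fin p → V) → (Fin p → V) → ℝ) : DF n := fun S T =>
  if h : S.card = p ∧ T.card = p then
    ω (fun i => e ((S.orderIsoOfFin h.1 i : Fin n)))
      (fun i => e ((T.orderIsoOfFin h.2 i : Fin n)))
  else 0

/-- The components of a bilinear form, viewed as a `(1,1)`-double form. -/
def ofBilin (e : OrthonormalBasis (Fin n) ℝ V) (b : V → V → ℝ) : DF n :=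
  ofForm e 1 fun x y => b (x 0) (y 0)

/-- The components of a `(2,2)`-double form given as a function of four vectors. -/
def ofCurv (e : OrthonormalBasis (Fin n) ℝ V) (R : V → V → V → V → ℝ) : DF n :=
  ofForm e 2 fun x y => R (x 0) (x 1) (y 0) (y 1)

/-- Bilinearity of a real-valued function of two vector arguments. -/
def IsBilin (b : V → V → ℝ) : Prop :=
  (∀ (c : ℝ) (x x' y : V), b (c • x + x') y = c * b x y + b x' y) ∧
  (∀ (c : ℝ) (x y y' : V), b x (c • y + y') = c * b x y + b x y')

/-- Symmetry of a bilinear form. -/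
def IsSymmBilin (b : V → V → ℝ) : Prop := ∀ x y, b x y = b y x

/-- An algebraic curvature tensor: a multilinear form of four vectors, antisymmetric
in the first two arguments, symmetric under exchange of the two pairs, and satisfying
the first Bianchi identity. -/
structure IsCurv (R : V → V → V → V → ℝ) : Prop where
  linear : ∀ (c : ℝ) (x x' y z w : V), R (c • x + x') y z w = c * R x y z w + R x' y z w
  antisymm : ∀ x y z w, R x y z w = - R y x z w
  pair_symm : ∀ x y z w, R x y z w = R z w x y
  bianchi : ∀ x y z w, R x y z w + R y z x w + R z x y w = 0

/-- Multilinearity of a real-valued function of `p` vector arguments. -/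
def IsMultilinear (p : ℕ) (f : (Fin p → V) → ℝ) : Prop :=
  ∀ (x : Fin p → V) (i : Fin p) (c : ℝ) (u v : V),
    f (Function.update x i (c • u + v)) =
      c * f (Function.update x i u) + f (Function.update x i v)

/-- A function of `p` vector arguments is alternating. -/
def IsAlt (p : ℕ) (f : (Fin p → V) → ℝ) : Prop :=
  ∀ (x : Fin p → V) (i j : Fin p), i ≠ j → x i = x j → f x = 0

/-- A `(p,p)`-double form, as a function of `p + p` vector arguments:
multilinear and alternating in each of the two blocks of arguments. -/
def IsDoubleForm (p : ℕ) (ω : (Fin p → V) → (Fin p → V) → ℝ) : Prop :=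
  (∀ y, IsMultilinear p fun x => ω x y) ∧ (∀ y, IsAlt p fun x => ω x y) ∧
  (∀ x, IsMultilinear p fun y => ω x y) ∧ (∀ x, IsAlt p fun y => ω x y)

/-- Symmetry of a `(p,p)`-double form: `ω(x;y) = ω(y;x)`. -/
def IsSymmForm (p : ℕ) (ω : (Fin p → V) → (Fin p → V) → ℝ) : Prop := ∀ x y, ω x y = ω y x

/-- The first Bianchi identity for a `(p,p)`-double form of vector arguments:
the complete antisymmetrization over the first `p+1` vector arguments vanishes. -/
def FirstBianchiForm (p : ℕ) (hp : 0 < p) (ω : (Fin p → V) → (Fin p → V) → ℝ) : Prop :=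
  ∀ (z : Fin (p + 1) → V) (y : Fin p → V),
    ∑ σ : Equiv.Perm (Fin (p + 1)),
      ((Equiv.Perm.sign σ : ℤ) : ℝ) *
        ω (fun i => z (σ (Fin.castSucc i))) (Function.update y ⟨0, hp⟩ (z (σ (Fin.last p)))) = 0

/-- The scalar curvature `Scal = c²R` of a `(2,2)`-double form (in components). -/
def scalDF {n : ℕ} (Rd : DF n) : ℝ := DF.toScalar (DF.contrN 2 Rd)

/-- The `2k`-th Gauss–Bonnet curvature `h_{2k} = c^{2k} R^k / (2k)!`. -/
def h2kDF {n : ℕ} (k : ℕ) (Rd : DF n) : ℝ :=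
  DF.toScalar (DF.contrN (2 * k) (DF.pow Rd k)) / ((2 * k).factorial : ℝ)

/-- The second Gauss–Bonnet curvature `h₄ = c⁴ R² / 4!`. -/
def h4DF {n : ℕ} (Rd : DF n) : ℝ :=
  DF.toScalar (DF.contrN 4 (DF.pow Rd 2)) / (Nat.factorial 4 : ℝ)

end Geometry

end

open scoped RealInnerProductSpace

/-
The components of `H` form the matrix `M - x xᵀ + (|a|²/2) I`, where `M` is the matrix of `S` and
`x` the coordinate vector of `a`. For a `(1,1)`-double form `h` with matrix `A`, `c²(h²)` equals
`2((tr A)² - tr A²)`, which is `4σ₂` when `A` is symmetric (Newton's identity for the eigenvalues).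
So everything reduces to expanding `tr H` and `tr H²`, using `tr (x xᵀ) = |a|²`,
`tr (M x xᵀ) = S(a,a)` and `tr (x xᵀ)² = |a|⁴`.
-/

theorem Finset.sum_powerset_eq_sum_singleton {α M : Type*} [DecidableEq α] [AddCommMonoid M]
    (s : Finset α) {f : Finset α → M} (hf : ∀ t, t.card ≠ 1 → f t = 0) :
    ∑ t ∈ s.powerset, f t = ∑ x ∈ s, f {x} := by
  have hsub : s.powersetCard 1 ⊆ s.powerset := fun t ht => mem_powerset.2 (mem_powersetCard.1 ht).1
  rw [← sum_subset hsub fun t ht ht' =>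
      hf t fun h => ht' (mem_powersetCard.2 ⟨mem_powerset.1 ht, h⟩),
    powersetCard_one, sum_map]
  rfl

theorem Finset.two_mul_sum_powersetCard_two_prod {ι R : Type*} [Fintype ι] [CommRing R]
    (f : ι → R) : 2 * ∑ s ∈ powersetCard 2 univ, ∏ i ∈ s, f i = (∑ i, f i) ^ 2 - ∑ i, f i ^ 2 := by
  have h := congrArg (MvPolynomial.aeval f) (MvPolynomial.mul_esymm_eq_sum ι R 2)
  simp [MvPolynomial.esymm, MvPolynomial.psum, Nat.sum_antidiagonal_eq_sum_range_succ_mk,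
    sum_range_succ, powersetCard_one] at h
  linear_combination h

namespace Matrix

theorem trace_conjStarAlgAut {ι 𝕜 : Type*} [Fintype ι] [DecidableEq ι] [RCLike 𝕜]
    (u : unitary (Matrix ι ι 𝕜)) (A : Matrix ι ι 𝕜) :
    (Unitary.conjStarAlgAut 𝕜 _ u A).trace = A.trace := by
  rw [Unitary.conjStarAlgAut_apply, trace_mul_cycle, Unitary.coe_star_mul_self, Matrix.one_mul]

theorem IsHermitian.trace_eq_sum_eigenvalues_real {ι : Type*} [Fintype ι] [DecidableEq ι]
    {A : Matrix ι ι ℝ} (hA : A.IsHermitian) : A.trace = ∑ i, hA.eigenvalues i := by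
  simpa using hA.trace_eq_sum_eigenvalues

theorem IsHermitian.trace_mul_self {ι : Type*} [Fintype ι] [DecidableEq ι]
    {A : Matrix ι ι ℝ} (hA : A.IsHermitian) : (A * A).trace = ∑ i, hA.eigenvalues i ^ 2 := by
  conv_lhs => rw [hA.spectral_theorem, ← map_mul, trace_conjStarAlgAut, diagonal_mul_diagonal,
    trace_diagonal]
  simp [sq]

theorem IsHermitian.sum_powersetCard_two_prod_eigenvalues {ι : Type*} [Fintype ι] [DecidableEq ι]
    {A : Matrix ι ι ℝ} (hA : A.IsHermitian) :
    ∑ s ∈ powersetCard 2 univ, ∏ i ∈ s, hA.eigenvalues i = (A.trace ^ 2 - (A * A).trace) / 2 := by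
  rw [eq_div_iff two_ne_zero, mul_comm, two_mul_sum_powersetCard_two_prod,
    hA.trace_eq_sum_eigenvalues_real, hA.trace_mul_self]

variable {ι R : Type*} [Fintype ι] [DecidableEq ι] [CommRing R]

theorem trace_sub_vecMulVec_add_smul_one (M : Matrix ι ι R) (x : ι → R) (c : R) :
    (M - vecMulVec x x + c • 1).trace = M.trace - x ⬝ᵥ x + Fintype.card ι * c := by
  simp [trace_add, trace_sub, trace_smul, trace_vecMulVec, mul_comm]

theorem trace_sub_vecMulVec_add_smul_one_mul_self (M : Matrix ι ι R) (x : ι → R) (c : R) :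
    ((M - vecMulVec x x + c • 1) * (M - vecMulVec x x + c • 1)).trace =
      (M * M).trace - 2 * (x ⬝ᵥ M *ᵥ x) + (x ⬝ᵥ x) ^ 2 + 2 * c * (M.trace - x ⬝ᵥ x) +
        Fintype.card ι * c ^ 2 := by
  have hMP : (M * vecMulVec x x).trace = x ⬝ᵥ M *ᵥ x := by
    rw [mul_vecMulVec, trace_vecMulVec, dotProduct_comm]
  have hPM : (vecMulVec x x * M).trace = x ⬝ᵥ M *ᵥ x := by
    rw [trace_mul_comm, hMP]
  have hPP : (vecMulVec x x * vecMulVec x x).trace = (x ⬝ᵥ x) ^ 2 := by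
    rw [mul_vecMulVec, trace_vecMulVec, vecMulVec_mulVec]
    simp [sq]
  simp only [add_mul, mul_add, sub_mul, mul_sub, Matrix.smul_mul, Matrix.mul_smul, Matrix.one_mul,
    Matrix.mul_one, trace_add, trace_sub, trace_smul, hMP, hPM, hPP, trace_one, trace_vecMulVec,
    smul_eq_mul]
  ring

end Matrix

namespace DF

variable {n : ℕ}

@[simp] lemma shuffleSign_empty_left (B : Finset (Fin n)) : shuffleSign ∅ B = 1 := by
  simp [shuffleSign]

@[simp] lemma shuffleSign_empty_right (A : Finset (Fin n)) : shuffleSign A ∅ = 1 := by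
  simp [shuffleSign]

lemma shuffleSign_mul_self (A B : Finset (Fin n)) : shuffleSign A B * shuffleSign A B = 1 := by
  rw [shuffleSign, ← pow_add]
  exact Even.neg_one_pow ⟨_, rfl⟩

lemma shuffleSign_singleton_mul_swap {i j : Fin n} (h : i ≠ j) :
    shuffleSign {i} {j} * shuffleSign {j} {i} = -1 := by
  rcases h.lt_or_gt with h | h <;> simp [shuffleSign, filter_singleton, h, h.not_gt]

lemma one_mul (ω : DF n) : mul (one n) ω = ω := by
  funext S T
  rw [mul, sum_eq_single_of_mem ∅ (empty_mem_powerset S) fun A _ hA => sum_eq_zero fun C _ => by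
      simp [one, hA],
    sum_eq_single_of_mem ∅ (empty_mem_powerset T) fun C _ hC => by simp [one, hC]]
  simp [one]

lemma pow_two (ω : DF n) : pow ω 2 = mul ω ω := by
  simp only [pow, one_mul]

lemma IsDeg.apply_eq_zero_of_left {p : ℕ} {ω : DF n} (h : IsDeg p ω) {S T : Finset (Fin n)}
    (hS : S.card ≠ p) : ω S T = 0 :=
  not_not.1 fun h' => hS (h S T h').1

lemma IsDeg.apply_eq_zero_of_right {p : ℕ} {ω : DF n} (h : IsDeg p ω) {S T : Finset (Fin n)}
    (hT : T.card ≠ p) : ω S T = 0 :=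
  not_not.1 fun h' => hT (h S T h').2

lemma mul_apply_pair {ω : DF n} (hω : IsDeg 1 ω) (θ : DF n) {i j : Fin n} (hij : i ≠ j) :
    mul ω θ {i, j} {i, j} =
      ω {i} {i} * θ {j} {j} + ω {j} {j} * θ {i} {i} - ω {i} {j} * θ {j} {i} -
        ω {j} {i} * θ {i} {j} := by
  have hi : ({i, j} : Finset (Fin n)) \ {i} = {j} := by
    rw [insert_sdiff_of_mem _ (mem_singleton_self i), sdiff_singleton_eq_erase,
      erase_eq_of_notMem (by simpa using hij)]
  have hj : ({i, j} : Finset (Fin n)) \ {j} = {i} := by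
    rw [insert_sdiff_of_notMem _ (by simpa using hij), sdiff_self]
    rfl
  rw [mul, sum_powerset_eq_sum_singleton _ fun A hA => sum_eq_zero fun C _ => by
    rw [hω.apply_eq_zero_of_left hA]; ring]
  rw [sum_congr rfl fun x _ => sum_powerset_eq_sum_singleton _ fun C hC => by
    rw [hω.apply_eq_zero_of_right hC]; ring]
  rw [sum_pair hij, sum_pair hij, sum_pair hij, hi, hj]
  have hij_sq := shuffleSign_mul_self {i} {j}
  have hji_sq := shuffleSign_mul_self {j} {i}
  have hij_swap := shuffleSign_singleton_mul_swap hij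
  have hji_swap := shuffleSign_singleton_mul_swap hij.symm
  linear_combination ω {i} {i} * θ {j} {j} * hij_sq + ω {j} {j} * θ {i} {i} * hji_sq +
    ω {i} {j} * θ {j} {i} * hij_swap + ω {j} {i} * θ {i} {j} * hji_swap

def toMatrix (ω : DF n) : Matrix (Fin n) (Fin n) ℝ := Matrix.of fun i j => ω {i} {j}

lemma toScalar_contrN_one (ω : DF n) : toScalar (contrN 1 ω) = ω.toMatrix.trace := by
  simp [toScalar, contrN, contr, toMatrix, Matrix.trace]

lemma toScalar_contrN_two_mul {ω : DF n} (hω : IsDeg 1 ω) (θ : DF n) :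
    toScalar (contrN 2 (mul ω θ)) =
      2 * (ω.toMatrix.trace * θ.toMatrix.trace - (ω.toMatrix * θ.toMatrix).trace) := by
  set f : Fin n → Fin n → ℝ := fun i j => ω {i} {i} * θ {j} {j} - ω {i} {j} * θ {j} {i}
  have hterm : ∀ i j : Fin n,
      (if j ∈ ({i} : Finset (Fin n)) then 0
        else shuffleSign {j} {i} * shuffleSign {j} {i} * mul ω θ {j, i} {j, i}) =
        f i j + f j i := by
    intro i j
    by_cases hji : j = i
    · subst hji
      simp [f]
    · rw [if_neg (by simpa using hji), shuffleSign_mul_self, _root_.one_mul,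
        mul_apply_pair hω θ hji]
      ring
  have hsum : toScalar (contrN 2 (mul ω θ)) = ∑ i, ∑ j, (f i j + f j i) := by
    show contr (contr (mul ω θ)) ∅ ∅ = _
    simp only [contr, notMem_empty, or_self, if_false, shuffleSign_empty_right, _root_.one_mul,
      insert_empty, hterm]
  rw [hsum]
  simp only [sum_add_distrib]
  rw [sum_comm (f := fun i j => f j i)]
  simp only [f, sum_sub_distrib, Matrix.trace, Matrix.diag, Matrix.mul_apply, toMatrix,
    Matrix.of_apply, sum_mul_sum]
  ring

lemma sigma_two {ω : DF n} (h : ω.toMatrix.IsHermitian) :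
    sigma 2 ω = (ω.toMatrix.trace ^ 2 - (ω.toMatrix * ω.toMatrix).trace) / 2 :=
  (dif_pos h).trans h.sum_powersetCard_two_prod_eigenvalues

end DF

section InnerProductSpace

variable {n : ℕ} {V : Type*} [NormedAddCommGroup V] [InnerProductSpace ℝ V]

lemma isDeg_ofBilin (e : OrthonormalBasis (Fin n) ℝ V) (b : V → V → ℝ) :
    DF.IsDeg 1 (ofBilin e b) := fun _ _ h => not_not.1 fun hST => h (dif_neg hST)

lemma toMatrix_ofBilin (e : OrthonormalBasis (Fin n) ℝ V) (b : V → V → ℝ) :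
    (ofBilin e b).toMatrix = Matrix.of fun i j => b (e i) (e j) := by
  ext i j
  simp [DF.toMatrix, ofBilin, ofForm, card_singleton, Fin.fin_one_eq_zero]

lemma isHermitian_toMatrix_ofBilin (e : OrthonormalBasis (Fin n) ℝ V) {b : V → V → ℝ}
    (hb : IsSymmBilin b) : (ofBilin e b).toMatrix.IsHermitian :=
  Matrix.IsHermitian.ext fun i j => by simp [toMatrix_ofBilin, hb (e i)]

def IsBilin.toLinearMap₂ {b : V → V → ℝ} (hb : IsBilin b) : V →ₗ[ℝ] V →ₗ[ℝ] ℝ :=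
  LinearMap.mk₂ ℝ b (fun x x' y => by simpa using hb.1 1 x x' y)
    (fun c x y => by simpa [show b 0 y = 0 by simpa using hb.1 1 0 0 y] using hb.1 c x 0 y)
    (fun x y y' => by simpa using hb.2 1 x y y')
    (fun c x y => by simpa [show b x 0 = 0 by simpa using hb.2 1 x 0 0] using hb.2 c x y 0)

lemma IsBilin.apply_eq_dotProduct_mulVec {b : V → V → ℝ} (hb : IsBilin b)
    (e : OrthonormalBasis (Fin n) ℝ V) (u v : V) :
    b u v =
      (fun i => ⟪u, e i⟫) ⬝ᵥ (Matrix.of fun i j => b (e i) (e j)).mulVec fun j => ⟪v, e j⟫ := by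
  have hrepr (w : V) : RingHom.id ℝ ∘ e.toBasis.repr w = fun i => ⟪w, e i⟫ := by
    ext i
    simp [OrthonormalBasis.repr_apply_apply, real_inner_comm]
  have hmat : LinearMap.toMatrix₂ e.toBasis e.toBasis hb.toLinearMap₂ =
      Matrix.of fun i j => b (e i) (e j) := by
    ext i j
    simp [LinearMap.toMatrix₂_apply, IsBilin.toLinearMap₂]
  rw [show b u v = hb.toLinearMap₂ u v from rfl,
    apply_eq_dotProduct_toMatrix₂_mulVec e.toBasis e.toBasis, hrepr, hrepr, hmat]

end InnerProductSpace

theorem stmt16_conformal_hessian_term_general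
    (n : ℕ)
    (V : Type*) [NormedAddCommGroup V] [InnerProductSpace ℝ V]
    (e : OrthonormalBasis (Fin n) ℝ V)
    (S : V → V → ℝ) (hbil : IsBilin S) (hsymm : IsSymmBilin S) (a : V) :
    DF.toScalar (DF.contrN 2 (DF.pow
        (ofBilin e (fun x y => S x y - ⟪a, x⟫ * ⟪a, y⟫ + (1 / 2) * ‖a‖ ^ 2 * ⟪x, y⟫)) 2)) =
      4 * DF.sigma 2 (ofBilin e S)
      + (((n : ℝ) - 1) * ((n : ℝ) - 4) / 2) * ‖a‖ ^ 4
      + 2 * ((n : ℝ) - 3) * DF.toScalar (DF.contrN 1 (ofBilin e S)) * ‖a‖ ^ 2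
      + 4 * S a a := by
  rw [DF.pow_two, DF.toScalar_contrN_two_mul (isDeg_ofBilin e _), DF.toScalar_contrN_one,
    DF.sigma_two (isHermitian_toMatrix_ofBilin e hsymm), toMatrix_ofBilin, toMatrix_ofBilin,
    hbil.apply_eq_dotProduct_mulVec e]
  set M : Matrix (Fin n) (Fin n) ℝ := Matrix.of fun i j => S (e i) (e j)
  set x : Fin n → ℝ := fun i => ⟪a, e i⟫
  have hx : x ⬝ᵥ x = ‖a‖ ^ 2 := by
    simpa [x, dotProduct, sq] using e.sum_sq_inner_left a
  have hH :
      (Matrix.of fun i j => S (e i) (e j) - ⟪a, e i⟫ * ⟪a, e j⟫ + 1 / 2 * ‖a‖ ^ 2 * ⟪e i, e j⟫) =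
        M - Matrix.vecMulVec x x + (1 / 2 * ‖a‖ ^ 2) • 1 := by
    ext i j
    simp [M, x, e.inner_eq_ite, Matrix.one_apply, Matrix.vecMulVec_apply]
  rw [hH, Matrix.trace_sub_vecMulVec_add_smul_one, Matrix.trace_sub_vecMulVec_add_smul_one_mul_self,
    hx, Fintype.card_fin]
  ring

/-- Let `S` be a symmetric bilinear form, `a ∈ V`, `α = g(a,·)`, and
`H = S − α⊗α + (1/2)|a|²·g`. Then
`c²(H²) = 4σ₂(S) + ((n−1)(n−4)/2)|a|⁴ + 2(n−3)(cS)|a|² + 4·S(a,a)`. -/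
theorem stmt16_conformal_hessian_term
    (n : ℕ)
    (V : Type*) [NormedAddCommGroup V] [InnerProductSpace ℝ V]
    (hV : Module.finrank ℝ V = n)
    (e : OrthonormalBasis (Fin n) ℝ V)
    (S : V → V → ℝ) (hbil : IsBilin S) (hsymm : IsSymmBilin S) (a : V) :
    DF.toScalar (DF.contrN 2 (DF.pow
        (ofBilin e (fun x y => S x y - ⟪a, x⟫ * ⟪a, y⟫ + (1 / 2) * ‖a‖ ^ 2 * ⟪x, y⟫)) 2)) =
      4 * DF.sigma 2 (ofBilin e S)
      + (((n : ℝ) - 1) * ((n : ℝ) - 4) / 2) * ‖a‖ ^ 4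
      + 2 * ((n : ℝ) - 3) * DF.toScalar (DF.contrN 1 (ofBilin e S)) * ‖a‖ ^ 2
      + 4 * S a a :=
  stmt16_conformal_hessian_term_general n V e S hbil hsymm a
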